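/- Let C, b > 0, p ≥ 1, and let {s_n}_{n≥1} be a positive sequence. If s_n ≤ C (m!)^p / (b^m n^m) for all m ∈ ℕ₀ and all n ≥ 1, then s_n ≤ C · 2^p · exp(−(p/2)(bn)^{1/p}) for all n ≥ 1. -/

import Mathlib

/-!
The hypothesis says exactly that every term `y ^ m / m!` of the exponential series at
`y = (b n) ^ (1/p)` is at most `t = (C / s n) ^ (1/p)`. Weighting the terms by `2 ^ (-m)` gives
`exp (y / 2) ≤ 2 t`, and raising this to the power `p` is the claim.
-/

open Real Nat

theorem Real.exp_mul_le_div_one_sub_of_pow_div_factorial_le {a t r : ℝ} (hr₀ : 0 ≤ r)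
    (hr₁ : r < 1) (h : ∀ m : ℕ, a ^ m / m ! ≤ t) : exp (r * a) ≤ t / (1 - r) := by
  have hterm (m : ℕ) : (r * a) ^ m / m ! ≤ t * r ^ m := by
    rw [mul_pow, mul_div_assoc, mul_comm t]
    exact mul_le_mul_of_nonneg_left (h m) (pow_nonneg hr₀ m)
  rw [exp_eq_exp_ℝ, div_eq_mul_inv]
  exact hasSum_le hterm (NormedSpace.expSeries_div_hasSum_exp (r * a))
    ((hasSum_geometric_of_lt_one hr₀ hr₁).mul_left t)

theorem Real.pow_div_factorial_le_rpow_inv {x K p : ℝ} (hx : 0 ≤ x) (hp : 0 < p) {m : ℕ}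
    (h : x ^ m ≤ K * (m ! : ℝ) ^ p) : (x ^ p⁻¹) ^ m / m ! ≤ K ^ p⁻¹ := by
  have hfac : (0 : ℝ) < m ! := by exact_mod_cast m.factorial_pos
  have hK : 0 ≤ K := nonneg_of_mul_nonneg_left ((pow_nonneg hx m).trans h) (by positivity)
  rw [← rpow_le_rpow_iff (by positivity) (by positivity) hp, rpow_inv_rpow hK hp.ne',
    div_rpow (by positivity) hfac.le, ← rpow_pow_comm (by positivity), rpow_inv_rpow hx hp.ne',
    div_le_iff₀ (by positivity)]
  exact h

theorem Real.exp_mul_rpow_inv_le_of_pow_le_mul_factorial_rpow {x K p : ℝ} (hx : 0 ≤ x)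
    (hp : 0 < p) (h : ∀ m : ℕ, x ^ m ≤ K * (m ! : ℝ) ^ p) :
    exp (p / 2 * x ^ p⁻¹) ≤ 2 ^ p * K := by
  have hK : 0 ≤ K := by simpa using (zero_le_one.trans (h 0))
  have hhalf : exp (1 / 2 * x ^ p⁻¹) ≤ 2 * K ^ p⁻¹ := by
    have := exp_mul_le_div_one_sub_of_pow_div_factorial_le (r := 1 / 2) (by norm_num)
      (by norm_num) fun m ↦ pow_div_factorial_le_rpow_inv hx hp (h m)
    rw [show (1 : ℝ) - 1 / 2 = 2⁻¹ by norm_num, div_inv_eq_mul] at this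
    linarith
  calc exp (p / 2 * x ^ p⁻¹) = exp (1 / 2 * x ^ p⁻¹) ^ p := by
        rw [← exp_mul]; ring_nf
    _ ≤ (2 * K ^ p⁻¹) ^ p := rpow_le_rpow (exp_pos _).le hhalf hp.le
    _ = 2 ^ p * K := by
        rw [mul_rpow (by norm_num) (by positivity), rpow_inv_rpow hK hp.ne']

theorem stmt_1_general (C b p : ℝ) (hb : 0 < b) (hp : 1 ≤ p)
    (s : ℕ → ℝ) (hs : ∀ n : ℕ, 1 ≤ n → 0 < s n)
    (h : ∀ m n : ℕ, 1 ≤ n →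
      s n ≤ C * (Nat.factorial m : ℝ) ^ p / (b ^ m * (n : ℝ) ^ m)) :
    ∀ n : ℕ, 1 ≤ n →
      s n ≤ C * 2 ^ p * Real.exp (-(p / 2) * (b * n) ^ (1 / p)) := by
  intro n hn
  have hsn := hs n hn
  have hbound (m : ℕ) : (b * n) ^ m ≤ C / s n * (m ! : ℝ) ^ p := by
    have hm := h m n hn
    rw [le_div_iff₀ (by positivity)] at hm
    rw [div_mul_eq_mul_div, le_div_iff₀ hsn, mul_pow]
    linarith
  have hexp := exp_mul_rpow_inv_le_of_pow_le_mul_factorial_rpow (by positivity)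
    (by linarith) hbound
  rw [← mul_div_assoc, le_div_iff₀ hsn] at hexp
  rw [neg_mul, exp_neg, one_div, ← div_eq_mul_inv, le_div_iff₀ (exp_pos _)]
  linarith

/-- Summation lemma: if `s n ≤ C (m!)^p / (b^m n^m)` for all `m`, then
`s n ≤ C 2^p exp(-(p/2)(bn)^{1/p})`. -/
theorem stmt_1 (C b p : ℝ) (hC : 0 < C) (hb : 0 < b) (hp : 1 ≤ p)
    (s : ℕ → ℝ) (hs : ∀ n : ℕ, 1 ≤ n → 0 < s n)
    (h : ∀ m n : ℕ, 1 ≤ n →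
      s n ≤ C * (Nat.factorial m : ℝ) ^ p / (b ^ m * (n : ℝ) ^ m)) :
    ∀ n : ℕ, 1 ≤ n →
      s n ≤ C * 2 ^ p * Real.exp (-(p / 2) * (b * n) ^ (1 / p)) :=
  stmt_1_general C b p hb hp s hs h
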